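/- Let K_φ be the Preconditioned Discrete-HAMS transition kernel on pairs (s,v) defined by: propose s* ∼ Q(s | z_t = s_t − v_{t+1/2}; s_t) ∝ exp(−½sᵀDs + (∇f(s_t) − Ws_t + (W+D)(s_t − v_{t+1/2}))ᵀs); set v* = −v_{t+1/2} + s_t − s* + φ(∇f(s*) − ∇f(s_t) + W(s_t − s*)); accept (s*, v*) with probability min{1, π(s*,−v*)Q_φ(s_t,−v_{t+1/2}|s*,−v*)/(π(s_t,v_{t+1/2})Q_φ(s*,v*|s_t,v_{t+1/2}))}, else move to (s_t, −v_{t+1/2}). Then K_φ satisfies the generalized detailed balance π(s,v)K_φ(s',v'|s,v) = π(s',−v')K_φ(s,−v|s',−v'), where π(s,v) ∝ exp(f(s) − ½vᵀ(W+D)v). -/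

import Mathlib

/-!
Both moves of the kernel are balanced separately. The momentum update is an involution up to
the sign flips: starting from the proposed pair (s*, −v*) the update returns −v. Hence the
probability flux π(s,v) Q(s*|s,v) α(s,v,s*) of an accepted move equals
min (π(s,v) Q(s*|s,v)) (π(s*,−v*) Q(s|s*,−v*)), which is symmetric under the reversed move.
The rejection move (s,v) ↦ (s,−v) is its own reverse.
-/

open Matrix
open scoped Classical

noncomputable section

/-- Proposal energy for the PDHAMS state proposal from (s, v): the auxiliary variable is
z = s − v and the energy of the proposed state sp is
−½spᵀDsp + (∇f(s) − Ws + (W+D)(s − v))ᵀsp. -/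
def pdhamsE {d : ℕ} (W D : Matrix (Fin d) (Fin d) ℝ)
    (gradf : (Fin d → ℝ) → Fin d → ℝ) (s v sp : Fin d → ℝ) : ℝ :=
  -(1 / 2) * (sp ⬝ᵥ (D *ᵥ sp)) + (gradf s - W *ᵥ s + (W + D) *ᵥ (s - v)) ⬝ᵥ sp

/-- Normalized PDHAMS state proposal probability. -/
def pdhamsQ {d : ℕ} (S : Finset (Fin d → ℝ)) (W D : Matrix (Fin d) (Fin d) ℝ)
    (gradf : (Fin d → ℝ) → Fin d → ℝ) (s v sp : Fin d → ℝ) : ℝ :=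
  Real.exp (pdhamsE W D gradf s v sp) / ∑ s'' ∈ S, Real.exp (pdhamsE W D gradf s v s'')

/-- Momentum update with negation and gradient correction:
v* = −v + s − s* + φ(∇f(s*) − ∇f(s) + W(s − s*)). -/
def pdhamsVstar {d : ℕ} (W : Matrix (Fin d) (Fin d) ℝ)
    (gradf : (Fin d → ℝ) → Fin d → ℝ) (φ : ℝ) (s v sp : Fin d → ℝ) : Fin d → ℝ :=
  -v + s - sp + φ • (gradf sp - gradf s + W *ᵥ (s - sp))

/-- Augmented (unnormalized) target π(s, v) ∝ exp(f(s) − ½ vᵀ(W+D)v). -/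
def pdhamsPi {d : ℕ} (W D : Matrix (Fin d) (Fin d) ℝ)
    (f : (Fin d → ℝ) → ℝ) (s v : Fin d → ℝ) : ℝ :=
  Real.exp (f s - (1 / 2) * (v ⬝ᵥ ((W + D) *ᵥ v)))

/-- Generalized Metropolis–Hastings acceptance probability of PDHAMS. -/
def pdhamsAcc {d : ℕ} (S : Finset (Fin d → ℝ)) (W D : Matrix (Fin d) (Fin d) ℝ)
    (f : (Fin d → ℝ) → ℝ) (gradf : (Fin d → ℝ) → Fin d → ℝ) (φ : ℝ)
    (s v sp : Fin d → ℝ) : ℝ :=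
  min 1 (pdhamsPi W D f sp (-(pdhamsVstar W gradf φ s v sp)) *
      pdhamsQ S W D gradf sp (-(pdhamsVstar W gradf φ s v sp)) s /
    (pdhamsPi W D f s v * pdhamsQ S W D gradf s v sp))

/-- PDHAMS transition kernel on pairs (s, v): accept the proposal (s*, v*) with the
generalized acceptance probability, otherwise move to (s, −v). -/
def pdhamsK {d : ℕ} (S : Finset (Fin d → ℝ)) (W D : Matrix (Fin d) (Fin d) ℝ)
    (f : (Fin d → ℝ) → ℝ) (gradf : (Fin d → ℝ) → Fin d → ℝ) (φ : ℝ)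
    (s v sp vp : Fin d → ℝ) : ℝ :=
  (if sp ∈ S ∧ vp = pdhamsVstar W gradf φ s v sp then
      pdhamsQ S W D gradf s v sp * pdhamsAcc S W D f gradf φ s v sp
    else 0)
  + (if sp = s ∧ vp = -v then
      ∑ sst ∈ S, pdhamsQ S W D gradf s v sst * (1 - pdhamsAcc S W D f gradf φ s v sst)
    else 0)

theorem mul_min_one_div_eq_min {a b : ℝ} (ha : 0 ≤ a) (hb : 0 ≤ b) :
    a * min 1 (b / a) = min a b := by
  rcases ha.eq_or_lt with rfl | ha
  · simp [hb]
  · rw [mul_min_of_nonneg _ _ ha.le, mul_one, mul_div_cancel₀ b ha.ne']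

section PDHAMS

variable {d : ℕ} (S : Finset (Fin d → ℝ)) (W D : Matrix (Fin d) (Fin d) ℝ)
  (f : (Fin d → ℝ) → ℝ) (gradf : (Fin d → ℝ) → Fin d → ℝ) (φ : ℝ)

theorem pdhamsVstar_neg_pdhamsVstar (s v sp : Fin d → ℝ) :
    pdhamsVstar W gradf φ sp (-pdhamsVstar W gradf φ s v sp) s = -v := by
  simp only [pdhamsVstar, Matrix.mulVec_sub]
  module

theorem eq_pdhamsVstar_iff (s v sp vp : Fin d → ℝ) :
    vp = pdhamsVstar W gradf φ s v sp ↔ -v = pdhamsVstar W gradf φ sp (-vp) s := by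
  constructor
  · rintro rfl
    exact (pdhamsVstar_neg_pdhamsVstar W gradf φ s v sp).symm
  · intro h
    have h' := pdhamsVstar_neg_pdhamsVstar W gradf φ sp (-vp) s
    rwa [← h, neg_neg, neg_neg, eq_comm] at h'

theorem pdhamsPi_nonneg (s v : Fin d → ℝ) : 0 ≤ pdhamsPi W D f s v :=
  (Real.exp_pos _).le

theorem pdhamsQ_nonneg (s v sp : Fin d → ℝ) : 0 ≤ pdhamsQ S W D gradf s v sp :=
  div_nonneg (Real.exp_pos _).le (Finset.sum_nonneg fun _ _ => (Real.exp_pos _).le)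

theorem pdhamsPi_mul_pdhamsQ_mul_pdhamsAcc (s v sp : Fin d → ℝ) :
    pdhamsPi W D f s v * (pdhamsQ S W D gradf s v sp * pdhamsAcc S W D f gradf φ s v sp)
      = min (pdhamsPi W D f s v * pdhamsQ S W D gradf s v sp)
          (pdhamsPi W D f sp (-pdhamsVstar W gradf φ s v sp) *
            pdhamsQ S W D gradf sp (-pdhamsVstar W gradf φ s v sp) s) := by
  rw [← mul_assoc, pdhamsAcc, mul_min_one_div_eq_min]
  · exact mul_nonneg (pdhamsPi_nonneg W D f s v) (pdhamsQ_nonneg S W D gradf s v sp)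
  · exact mul_nonneg (pdhamsPi_nonneg W D f _ _) (pdhamsQ_nonneg S W D gradf _ _ s)

theorem pdhamsK_accept_balance {s v sp vp : Fin d → ℝ} (hs : s ∈ S) (hsp : sp ∈ S) :
    pdhamsPi W D f s v *
        (if sp ∈ S ∧ vp = pdhamsVstar W gradf φ s v sp then
          pdhamsQ S W D gradf s v sp * pdhamsAcc S W D f gradf φ s v sp else 0)
      = pdhamsPi W D f sp (-vp) *
        (if s ∈ S ∧ -v = pdhamsVstar W gradf φ sp (-vp) s then
          pdhamsQ S W D gradf sp (-vp) s * pdhamsAcc S W D f gradf φ sp (-vp) s else 0) := by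
  by_cases h : vp = pdhamsVstar W gradf φ s v sp
  · have h' := (eq_pdhamsVstar_iff W gradf φ s v sp vp).mp h
    rw [if_pos ⟨hsp, h⟩, if_pos ⟨hs, h'⟩, pdhamsPi_mul_pdhamsQ_mul_pdhamsAcc,
      pdhamsPi_mul_pdhamsQ_mul_pdhamsAcc, ← h', neg_neg, ← h, min_comm]
  · rw [if_neg fun hc => h hc.2,
      if_neg fun hc => h ((eq_pdhamsVstar_iff W gradf φ s v sp vp).mpr hc.2), mul_zero, mul_zero]

theorem pdhamsK_reject_balance (s v sp vp : Fin d → ℝ) :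
    pdhamsPi W D f s v *
        (if sp = s ∧ vp = -v then
          ∑ t ∈ S, pdhamsQ S W D gradf s v t * (1 - pdhamsAcc S W D f gradf φ s v t) else 0)
      = pdhamsPi W D f sp (-vp) *
        (if s = sp ∧ -v = -(-vp) then
          ∑ t ∈ S, pdhamsQ S W D gradf sp (-vp) t * (1 - pdhamsAcc S W D f gradf φ sp (-vp) t)
          else 0) := by
  by_cases h : sp = s ∧ vp = -v
  · obtain ⟨rfl, rfl⟩ := h
    simp only [neg_neg]
  · rw [if_neg h, if_neg fun hc => h ⟨hc.1.symm, by rw [hc.2, neg_neg]⟩, mul_zero, mul_zero]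

end PDHAMS

theorem stmt10_general {d : ℕ} (S : Finset (Fin d → ℝ))
    (W D : Matrix (Fin d) (Fin d) ℝ)
    (f : (Fin d → ℝ) → ℝ) (gradf : (Fin d → ℝ) → Fin d → ℝ)
    (φ : ℝ) :
    ∀ s v sp vp : Fin d → ℝ, s ∈ S → sp ∈ S →
      pdhamsPi W D f s v * pdhamsK S W D f gradf φ s v sp vp
        = pdhamsPi W D f sp (-vp) * pdhamsK S W D f gradf φ sp (-vp) s (-v) := by
  intro s v sp vp hs hsp
  rw [pdhamsK, pdhamsK, mul_add, mul_add,
    pdhamsK_accept_balance S W D f gradf φ hs hsp, pdhamsK_reject_balance]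

/-- The PDHAMS transition kernel K_φ satisfies generalized detailed balance:
π(s,v)K_φ(s',v'|s,v) = π(s',−v')K_φ(s,−v|s',−v'). -/
theorem stmt10 {d : ℕ} (S : Finset (Fin d → ℝ))
    (W D : Matrix (Fin d) (Fin d) ℝ)
    (hW : W.IsSymm) (hD : D.IsDiag) (hpos : (W + D).PosDef)
    (f : (Fin d → ℝ) → ℝ) (gradf : (Fin d → ℝ) → Fin d → ℝ)
    (φ : ℝ) (hφ : 0 ≤ φ) :
    ∀ s v sp vp : Fin d → ℝ, s ∈ S → sp ∈ S →
      pdhamsPi W D f s v * pdhamsK S W D f gradf φ s v sp vp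
        = pdhamsPi W D f sp (-vp) * pdhamsK S W D f gradf φ sp (-vp) s (-v) :=
  stmt10_general S W D f gradf φ

end
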